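/- For every nonempty finite digraph D with DAG-depth ddp(D) = k, there exists a valid DAG-depth decomposition (P, org) of D whose depth is exactly k. -/

import Mathlib

/-!
Induction on the number of vertices, following the recursion defining `ddp`. If `D` is a single
vertex or has a single reachable fragment, take a vertex `v` minimising `ddp (D - v)` and a
decomposition `P` of `D - v`, and put a new root labelled `v` above the roots of `P`: every root
path now passes through `v`, which covers all edges into `v`, and the depth grows by one. If `D`
has several fragments, take the disjoint union of decompositions of the fragments: a fragment is
closed under out-edges, so the neighbour cover of each piece stays valid, and the depth of the
union is the maximum of the depths.
-/

open scoped Classical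

noncomputable section

/-- A finite directed graph: a finite vertex set together with an adjacency
relation whose edges join vertices of the graph. -/
structure FinDigraph (α : Type) where
  verts : Finset α
  Adj : α → α → Prop
  adj_mem : ∀ u v, Adj u v → u ∈ verts ∧ v ∈ verts

namespace FinDigraph

variable {α β : Type}

/-- The out-neighbourhood `N⁺_D(v)`. -/
def outNbhd (D : FinDigraph α) (v : α) : Set α := {u | D.Adj v u}

/-- The set of vertices reachable from `s` by a (possibly trivial) directed path. -/
def reachSet (D : FinDigraph α) (s : α) : Finset α :=
  D.verts.filter fun v => Relation.ReflTransGen D.Adj s v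

/-- A reachable fragment: an inclusion-maximal set among the reachable sets. -/
def IsFragment (D : FinDigraph α) (R : Finset α) : Prop :=
  (∃ s ∈ D.verts, R = D.reachSet s) ∧
  ∀ s ∈ D.verts, R ⊆ D.reachSet s → R = D.reachSet s

/-- The collection of all reachable fragments of `D`. -/
def fragments (D : FinDigraph α) : Finset (Finset α) :=
  D.verts.powerset.filter fun R => D.IsFragment R

/-- The induced subdigraph `D[S]`. -/
def induce (D : FinDigraph α) (S : Finset α) : FinDigraph α where
  verts := D.verts ∩ S
  Adj u v := D.Adj u v ∧ u ∈ S ∧ v ∈ S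
  adj_mem := fun u v h => ⟨Finset.mem_inter.mpr ⟨(D.adj_mem u v h.1).1, h.2.1⟩,
    Finset.mem_inter.mpr ⟨(D.adj_mem u v h.1).2, h.2.2⟩⟩

/-- Deletion of a vertex: `D − v = D[V(D) ∖ {v}]`. -/
def deleteVert (D : FinDigraph α) (v : α) : FinDigraph α :=
  D.induce (D.verts.erase v)

/-- Fuel-based helper for DAG-depth; the fuel `|V(D)|` always suffices since each
recursive call strictly decreases the number of vertices. -/
def ddpAux : ℕ → FinDigraph α → ℕ
  | 0, _ => 0
  | n+1, D =>
    if hcard : D.verts.card ≤ 1 then 1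
    else if D.fragments.card = 1 then
      1 + D.verts.inf' (Finset.card_pos.mp (by omega)) fun v => ddpAux n (D.deleteVert v)
    else
      D.fragments.sup fun R => ddpAux n (D.induce R)

/-- The DAG-depth of a digraph. -/
def ddp (D : FinDigraph α) : ℕ := ddpAux D.verts.card D

/-- A DAG: a (finite) digraph with no directed cycles. -/
def IsDag (P : FinDigraph α) : Prop := ∀ v, ¬ Relation.TransGen P.Adj v v

/-- A root of a DAG: a vertex of indegree zero. -/
def IsRoot (P : FinDigraph α) (r : α) : Prop := r ∈ P.verts ∧ ∀ u, ¬ P.Adj u r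

/-- `y` is a descendant of `x`: there is a (possibly trivial) directed path from `x` to `y`. -/
def Desc (P : FinDigraph α) (x y : α) : Prop := Relation.ReflTransGen P.Adj x y

/-- `l` is a directed path in `P` starting at a root of `P` and ending at `v`. -/
def IsRootPath (P : FinDigraph α) (l : List α) (v : α) : Prop :=
  l ≠ [] ∧ l.Chain' P.Adj ∧ (∀ x ∈ l, x ∈ P.verts) ∧
  (∃ r, l.head? = some r ∧ P.IsRoot r) ∧ l.getLast? = some v

/-- The depth of a DAG: the maximum number of vertices on a directed path. -/
def depth (P : FinDigraph α) : ℕ :=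
  sSup {n : ℕ | ∃ l : List α, l.Chain' P.Adj ∧ (∀ x ∈ l, x ∈ P.verts) ∧ l.length = n}

/-- The Neighbor cover condition for a DAG-depth decomposition `(P, org)` of `D`. -/
def NeighborCover (D : FinDigraph α) (P : FinDigraph β) (org : β → α) : Prop :=
  ∀ v' ∈ P.verts, ∀ u, D.Adj (org v') u →
    (∃ u' ∈ P.verts, org u' = u ∧ P.Desc v' u') ∨
    (∀ l, P.IsRootPath l v' → ∃ u' ∈ l, org u' = u)

/-- `(P, org)` is a valid DAG-depth decomposition of `D`: `P` is a DAG, `org` maps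
`V(P)` onto `V(D)`, and the Neighbor cover condition holds. -/
def IsValidDecomp (D : FinDigraph α) (P : FinDigraph β) (org : β → α) : Prop :=
  P.IsDag ∧ (∀ v' ∈ P.verts, org v' ∈ D.verts) ∧
  (∀ v ∈ D.verts, ∃ v' ∈ P.verts, org v' = v) ∧
  NeighborCover D P org

end FinDigraph

theorem List.exists_eq_map_of_isChain_cons {β γ : Type*} {R : γ → γ → Prop}
    {S : β → β → Prop} {f : β → γ} (hf : ∀ a y, R (f a) y → ∃ c, y = f c ∧ S a c)
    {a : β} {l : List γ}
    (hl : (f a :: l).IsChain R) : ∃ l', l = l'.map f ∧ (a :: l').IsChain S := by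
  induction l generalizing a with
  | nil => exact ⟨[], rfl, .singleton a⟩
  | cons y l ih =>
    obtain ⟨hay, hl⟩ := List.isChain_cons_cons.mp hl
    obtain ⟨c, rfl, hac⟩ := hf a y hay
    obtain ⟨l', rfl, hl'⟩ := ih hl
    exact ⟨c :: l', rfl, .cons_cons hac hl'⟩

theorem Relation.TransGen.exists_eq_apply {β γ : Type*} {R : γ → γ → Prop}
    {S : β → β → Prop} {f : β → γ} (hf : ∀ a y, R (f a) y → ∃ c, y = f c ∧ S a c)
    {a : β} {y : γ} (h : Relation.TransGen R (f a) y) :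
    ∃ c, y = f c ∧ Relation.TransGen S a c := by
  induction h with
  | single h =>
    obtain ⟨c, rfl, hac⟩ := hf a _ h
    exact ⟨c, rfl, .single hac⟩
  | tail _ h ih =>
    obtain ⟨c, rfl, hac⟩ := ih
    obtain ⟨d, rfl, hcd⟩ := hf c _ h
    exact ⟨d, rfl, hac.tail hcd⟩

namespace FinDigraph

variable {α β : Type}

section Fragments

variable {D : FinDigraph α}

def IsOutClosed (D : FinDigraph α) (S : Finset α) : Prop :=
  ∀ x ∈ S, ∀ y, D.Adj x y → y ∈ S

theorem mem_reachSet {s v : α} :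
    v ∈ D.reachSet s ↔ v ∈ D.verts ∧ Relation.ReflTransGen D.Adj s v :=
  Finset.mem_filter

theorem isOutClosed_reachSet (s : α) : D.IsOutClosed (D.reachSet s) := fun _ hx y hxy =>
  mem_reachSet.mpr ⟨(D.adj_mem _ y hxy).2, (mem_reachSet.mp hx).2.tail hxy⟩

theorem isOutClosed_sup {F : Finset (Finset α)} (hF : ∀ R ∈ F, D.IsOutClosed R) :
    D.IsOutClosed (F.sup id) := by
  intro x hx y hxy
  obtain ⟨R, hR, hxR⟩ := Finset.mem_sup.mp hx
  exact Finset.mem_sup.mpr ⟨R, hR, hF R hR x hxR y hxy⟩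

theorem mem_fragments {R : Finset α} : R ∈ D.fragments ↔ R ⊆ D.verts ∧ D.IsFragment R := by
  rw [fragments, Finset.mem_filter, Finset.mem_powerset]

theorem isOutClosed_of_mem_fragments {R : Finset α} (hR : R ∈ D.fragments) :
    D.IsOutClosed R := by
  obtain ⟨-, ⟨s, -, rfl⟩, -⟩ := mem_fragments.mp hR
  exact isOutClosed_reachSet s

theorem nonempty_of_mem_fragments {R : Finset α} (hR : R ∈ D.fragments) : R.Nonempty := by
  obtain ⟨-, ⟨s, hs, rfl⟩, -⟩ := mem_fragments.mp hR
  exact ⟨s, mem_reachSet.mpr ⟨hs, .refl⟩⟩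

theorem exists_mem_fragments_superset {v : α} (hv : v ∈ D.verts) :
    ∃ R ∈ D.fragments, D.reachSet v ⊆ R := by
  set T := (D.verts.image D.reachSet).filter (D.reachSet v ⊆ ·)
  have hvT : D.reachSet v ∈ T := Finset.mem_filter.mpr ⟨Finset.mem_image_of_mem _ hv, le_rfl⟩
  obtain ⟨R, hR, hmax⟩ := T.exists_maximal ⟨_, hvT⟩
  obtain ⟨hRim, hvR⟩ := Finset.mem_filter.mp hR
  obtain ⟨s₀, hs₀, rfl⟩ := Finset.mem_image.mp hRim
  refine ⟨_, mem_fragments.mpr ⟨Finset.filter_subset _ _, ⟨s₀, hs₀, rfl⟩, ?_⟩, hvR⟩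
  intro s hs hsub
  have hsT : D.reachSet s ∈ T :=
    Finset.mem_filter.mpr ⟨Finset.mem_image_of_mem _ hs, hvR.trans hsub⟩
  exact le_antisymm hsub (hmax hsT hsub)

theorem sup_fragments : D.fragments.sup id = D.verts := by
  refine le_antisymm (Finset.sup_le fun R hR => (mem_fragments.mp hR).1) fun v hv => ?_
  obtain ⟨R, hR, hvR⟩ := exists_mem_fragments_superset hv
  exact Finset.mem_sup.mpr ⟨R, hR, hvR (mem_reachSet.mpr ⟨hv, .refl⟩)⟩

/-- If a fragment were all of `V(D)`, it would be the unique fragment, since every fragment is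
contained in the reachable set of the source of that one. -/
theorem card_lt_of_mem_fragments (hf : D.fragments.card ≠ 1) {R : Finset α}
    (hR : R ∈ D.fragments) : R.card < D.verts.card := by
  obtain ⟨hRV, ⟨s, hs, hRs⟩, -⟩ := mem_fragments.mp hR
  refine Finset.card_lt_card (Finset.ssubset_iff_subset_ne.mpr ⟨hRV, fun hRV' => hf ?_⟩)
  refine Finset.card_eq_one.mpr ⟨R, Finset.eq_singleton_iff_unique_mem.mpr ⟨hR, ?_⟩⟩
  intro R' hR'
  obtain ⟨hR'V, -, hmax⟩ := mem_fragments.mp hR'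
  rw [hRs]
  exact hmax s hs (hRs ▸ hRV' ▸ hR'V)

theorem induce_verts {S : Finset α} (h : S ⊆ D.verts) : (D.induce S).verts = S :=
  Finset.inter_eq_right.mpr h

theorem induce_verts_self : D.induce D.verts = D := by
  obtain ⟨V, Adj, adj_mem⟩ := D
  simp only [induce, mk.injEq, Finset.inter_self, true_and]
  funext u v
  exact propext ⟨And.left, fun h => ⟨h, adj_mem u v h⟩⟩

theorem deleteVert_verts {v : α} : (D.deleteVert v).verts = D.verts.erase v :=
  induce_verts (Finset.erase_subset _ _)

end Fragments

section DagDepth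

variable {D : FinDigraph α}

theorem ddp_of_verts_eq_empty (h : D.verts = ∅) : ddp D = 0 := by
  rw [ddp, h, Finset.card_empty, ddpAux]

theorem ddpAux_eq_of_card_le {n m : ℕ} (hne : D.verts.Nonempty) (hn : D.verts.card ≤ n)
    (hm : D.verts.card ≤ m) : ddpAux n D = ddpAux m D := by
  induction n generalizing m D with
  | zero => exact absurd hn (Finset.card_pos.mpr hne).not_ge
  | succ n ih =>
    obtain ⟨m, rfl⟩ : ∃ m', m = m' + 1 :=
      Nat.exists_eq_add_one.mpr ((Finset.card_pos.mpr hne).trans_le hm)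
    simp only [ddpAux]
    split_ifs with h1 hf
    · rfl
    · congr 1
      refine Finset.inf'_congr _ rfl fun v hv => ?_
      have hcard : (D.deleteVert v).verts.card + 1 = D.verts.card := by
        rw [deleteVert_verts, Finset.card_erase_add_one hv]
      exact ih (Finset.card_pos.mp (by omega)) (by omega) (by omega)
    · refine Finset.sup_congr rfl fun R hR => ?_
      have hRV := induce_verts (mem_fragments.mp hR).1
      have hlt := card_lt_of_mem_fragments hf hR
      rw [← hRV] at hlt
      exact ih (hRV.symm ▸ nonempty_of_mem_fragments hR) (by omega) (by omega)

theorem exists_ddp_eq_ddp_deleteVert_add_one (hne : D.verts.Nonempty)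
    (h : D.verts.card = 1 ∨ D.fragments.card = 1) :
    ∃ v ∈ D.verts, ddp D = ddp (D.deleteVert v) + 1 := by
  obtain ⟨n, hn⟩ := Nat.exists_eq_add_one.mpr (Finset.card_pos.mpr hne)
  by_cases h1 : D.verts.card = 1
  · obtain ⟨v, hv⟩ := Finset.card_eq_one.mp h1
    refine ⟨v, by simp [hv], ?_⟩
    rw [ddp_of_verts_eq_empty (D := D.deleteVert v)
      (by rw [deleteVert_verts, hv, Finset.erase_singleton]), ddp, h1, ddpAux, dif_pos h1.le]
  · have hcard : ∀ w ∈ D.verts, (D.deleteVert w).verts.card = n := fun w hw => by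
      rw [deleteVert_verts, Finset.card_erase_of_mem hw]; omega
    obtain ⟨v, hv, hmin⟩ := Finset.exists_mem_eq_inf' hne fun v => ddp (D.deleteVert v)
    refine ⟨v, hv, ?_⟩
    rw [ddp, hn, ddpAux, dif_neg (by omega), if_pos (h.resolve_left h1), add_comm, ← hmin]
    exact congrArg (· + 1) (Finset.inf'_congr _ rfl fun w hw => by rw [ddp, hcard w hw])

theorem ddp_eq_sup_fragments (h2 : 1 < D.verts.card) (hf : D.fragments.card ≠ 1) :
    ddp D = D.fragments.sup fun R => ddp (D.induce R) := by
  obtain ⟨n, hn⟩ := Nat.exists_eq_add_one.mpr (zero_lt_one.trans h2)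
  rw [ddp, hn, ddpAux, dif_neg (by omega), if_neg hf]
  refine Finset.sup_congr rfl fun R hR => ?_
  have hRV := induce_verts (mem_fragments.mp hR).1
  have hlt := card_lt_of_mem_fragments hf hR
  rw [← hRV] at hlt
  exact ddpAux_eq_of_card_le (hRV.symm ▸ nonempty_of_mem_fragments hR) (by omega) le_rfl

end DagDepth

section Dag

variable {P : FinDigraph β}

theorem IsDag.nodup {l : List β} (hP : P.IsDag) (hl : l.IsChain P.Adj) : l.Nodup := by
  refine ((hl.imp fun _ _ => Relation.TransGen.single).pairwise).imp ?_
  rintro x _ hxy rfl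
  exact hP x hxy

def pathLengths (P : FinDigraph β) : Set ℕ :=
  {n | ∃ l : List β, l.IsChain P.Adj ∧ (∀ x ∈ l, x ∈ P.verts) ∧ l.length = n}

theorem zero_mem_pathLengths : 0 ∈ P.pathLengths := ⟨[], .nil, by simp, rfl⟩

theorem IsDag.bddAbove_pathLengths (hP : P.IsDag) : BddAbove P.pathLengths := by
  refine ⟨P.verts.card, ?_⟩
  rintro _ ⟨l, hl, hlV, rfl⟩
  rw [← List.toFinset_card_of_nodup (hP.nodup hl)]
  exact Finset.card_le_card fun x hx => hlV x (List.mem_toFinset.mp hx)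

theorem IsDag.length_le_depth (hP : P.IsDag) {l : List β} (hl : l.IsChain P.Adj)
    (hlV : ∀ x ∈ l, x ∈ P.verts) : l.length ≤ depth P :=
  le_csSup hP.bddAbove_pathLengths ⟨l, hl, hlV, rfl⟩

theorem IsDag.exists_length_eq_depth (hP : P.IsDag) :
    ∃ l : List β, l.IsChain P.Adj ∧ (∀ x ∈ l, x ∈ P.verts) ∧ l.length = depth P :=
  Nat.sSup_mem ⟨0, zero_mem_pathLengths⟩ hP.bddAbove_pathLengths

theorem depth_le {m : ℕ}
    (h : ∀ l : List β, l.IsChain P.Adj → (∀ x ∈ l, x ∈ P.verts) → l.length ≤ m) :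
    depth P ≤ m :=
  csSup_le ⟨0, zero_mem_pathLengths⟩ fun _ ⟨l, hl, hlV, hn⟩ => hn ▸ h l hl hlV

theorem IsDag.isRoot_of_length_eq_depth (hP : P.IsDag) {a : β} {l : List β}
    (hl : (a :: l).IsChain P.Adj) (hlV : ∀ x ∈ a :: l, x ∈ P.verts)
    (hlen : (a :: l).length = depth P) : P.IsRoot a := by
  refine ⟨hlV a List.mem_cons_self, fun u hu => ?_⟩
  have hlong := hP.length_le_depth (hl.cons_cons hu)
    (List.forall_mem_cons.mpr ⟨(P.adj_mem u a hu).1, hlV⟩)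
  simp only [List.length_cons] at hlong hlen
  omega

/-- Among the vertices from which `v` is reachable, one with the fewest proper ancestors is
a root: a proper ancestor of it would have strictly fewer. -/
theorem IsDag.exists_isRoot_reflTransGen (hP : P.IsDag) {v : β} (hv : v ∈ P.verts) :
    ∃ r, P.IsRoot r ∧ Relation.ReflTransGen P.Adj r v := by
  let anc (u : β) := P.verts.filter (Relation.TransGen P.Adj · u)
  obtain ⟨r, hr, hmin⟩ := Finset.exists_min_image
    (P.verts.filter (Relation.ReflTransGen P.Adj · v)) (fun u => (anc u).card)
    ⟨v, Finset.mem_filter.mpr ⟨hv, .refl⟩⟩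
  obtain ⟨hrV, hrv⟩ := Finset.mem_filter.mp hr
  refine ⟨r, ⟨hrV, fun u hur => ?_⟩, hrv⟩
  have huV := (P.adj_mem u r hur).1
  have hlt : (anc u).card < (anc r).card := by
    refine Finset.card_lt_card ⟨fun w hw => ?_, fun hsub => ?_⟩
    · obtain ⟨hwV, hwu⟩ := Finset.mem_filter.mp hw
      exact Finset.mem_filter.mpr ⟨hwV, hwu.tail hur⟩
    · exact hP u (Finset.mem_filter.mp (hsub (Finset.mem_filter.mpr ⟨huV, .single hur⟩))).2
  exact (hmin u (Finset.mem_filter.mpr ⟨huV, hrv.head hur⟩)).not_gt hlt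

end Dag

section Empty

def empty : FinDigraph β where
  verts := ∅
  Adj _ _ := False
  adj_mem _ _ h := h.elim

theorem depth_empty : depth (empty : FinDigraph β) = 0 :=
  Nat.eq_zero_of_le_zero <| depth_le fun l _ hlV => by
    cases l with
    | nil => rfl
    | cons x _ => exact absurd (hlV x List.mem_cons_self) (Finset.notMem_empty x)

theorem isValidDecomp_empty {D : FinDigraph α} (hD : D.verts = ∅) {org : β → α} :
    IsValidDecomp D empty org := by
  refine ⟨fun _ h => ?_, fun _ h => absurd h (Finset.notMem_empty _), fun _ h => ?_,
    fun _ h => absurd h (Finset.notMem_empty _)⟩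
  · cases h with
    | single h => exact h
    | tail _ h => exact h
  · exact absurd (hD ▸ h) (Finset.notMem_empty _)

end Empty

section Cone

def cone (P : FinDigraph ℕ) : FinDigraph ℕ where
  verts := insert 0 (P.verts.image (· + 1))
  Adj x y := match x, y with
    | 0, b + 1 => P.IsRoot b
    | a + 1, b + 1 => P.Adj a b
    | _, 0 => False
  adj_mem := by
    rintro (_ | a) (_ | b) h
    · exact h.elim
    · exact ⟨Finset.mem_insert_self _ _,
        Finset.mem_insert_of_mem (Finset.mem_image_of_mem _ h.1)⟩
    · exact h.elim
    · exact ⟨Finset.mem_insert_of_mem (Finset.mem_image_of_mem _ (P.adj_mem a b h).1),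
        Finset.mem_insert_of_mem (Finset.mem_image_of_mem _ (P.adj_mem a b h).2)⟩

variable {P : FinDigraph ℕ}

theorem zero_mem_cone : 0 ∈ (cone P).verts := Finset.mem_insert_self _ _

theorem succ_mem_cone {a : ℕ} : a + 1 ∈ (cone P).verts ↔ a ∈ P.verts := by
  simp [cone]

theorem not_cone_adj_zero (x : ℕ) : ¬ (cone P).Adj x 0 := by
  cases x <;> exact id

theorem exists_eq_succ_of_cone_adj (a y : ℕ) (h : (cone P).Adj (a + 1) y) :
    ∃ b, y = b + 1 ∧ P.Adj a b := by
  cases y with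
  | zero => exact (not_cone_adj_zero _ h).elim
  | succ b => exact ⟨b, rfl, h⟩

theorem reflTransGen_cone_succ {a b : ℕ} (h : Relation.ReflTransGen P.Adj a b) :
    Relation.ReflTransGen (cone P).Adj (a + 1) (b + 1) :=
  Relation.ReflTransGen.lift (p := (cone P).Adj) (· + 1) (fun _ _ h => h) _ _ h

theorem IsDag.cone (hP : P.IsDag) : (cone P).IsDag := by
  rintro (_ | a) h
  · cases h with
    | single h => exact not_cone_adj_zero _ h
    | tail _ h => exact not_cone_adj_zero _ h
  · obtain ⟨c, hca, hac⟩ := h.exists_eq_apply exists_eq_succ_of_cone_adj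
    exact hP a (Nat.succ_injective hca ▸ hac)

theorem isRoot_cone_iff {r : ℕ} : (cone P).IsRoot r ↔ r = 0 := by
  refine ⟨fun ⟨hr, hno⟩ => ?_, fun h => h ▸ ⟨zero_mem_cone, not_cone_adj_zero⟩⟩
  cases r with
  | zero => rfl
  | succ b =>
    by_cases hb : P.IsRoot b
    · exact (hno 0 hb).elim
    · obtain ⟨u, hu⟩ : ∃ u, P.Adj u b := by
        by_contra! hno'
        exact hb ⟨succ_mem_cone.mp hr, hno'⟩
      exact (hno (u + 1) hu).elim

theorem zero_mem_of_isRootPath_cone {l : List ℕ} {x : ℕ} (h : (cone P).IsRootPath l x) :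
    0 ∈ l := by
  obtain ⟨-, -, -, ⟨r, hr, hroot⟩, -⟩ := h
  exact isRoot_cone_iff.mp hroot ▸ List.mem_of_mem_head? hr

theorem exists_isRootPath_of_isRootPath_cone {l : List ℕ} {a : ℕ}
    (h : (cone P).IsRootPath l (a + 1)) :
    ∃ l', l = 0 :: l'.map (· + 1) ∧ P.IsRootPath l' a := by
  obtain ⟨-, hl, hlV, ⟨r, hr, hroot⟩, hlast⟩ := h
  obtain ⟨t, rfl⟩ : ∃ t, l = 0 :: t := by
    obtain _ | ⟨x, t⟩ := l
    · simp at hr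
    · exact ⟨t, by simpa [isRoot_cone_iff.mp hroot] using hr⟩
  obtain _ | ⟨_ | b, t⟩ := t
  · simp at hlast
  · exact (not_cone_adj_zero 0 (List.isChain_cons_cons.mp hl).1).elim
  obtain ⟨hb, hbt⟩ := List.isChain_cons_cons.mp hl
  obtain ⟨t', rfl, hbt'⟩ := List.exists_eq_map_of_isChain_cons exists_eq_succ_of_cone_adj hbt
  refine ⟨b :: t', rfl, List.cons_ne_nil _ _, hbt', fun x hx => ?_, ⟨b, rfl, hb⟩, ?_⟩
  · exact succ_mem_cone.mp
      (hlV _ (List.mem_cons_of_mem _ (List.mem_map_of_mem (f := (· + 1)) hx)))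
  · rw [List.getLast?_cons_cons] at hlast
    have hlast' : ((b :: t').map (· + 1)).getLast? = some (a + 1) := hlast
    rw [List.getLast?_map, Option.map_eq_some_iff] at hlast'
    obtain ⟨c, hc, hca⟩ := hlast'
    rwa [← Nat.succ_injective hca]

theorem depth_cone (hP : P.IsDag) : depth (cone P) = depth P + 1 := by
  refine le_antisymm (depth_le fun l hl hlV => ?_) ?_
  · obtain _ | ⟨x, _ | ⟨_ | b, t⟩⟩ := l
    · simp
    · simp
    · exact (not_cone_adj_zero x (List.isChain_cons_cons.mp hl).1).elim
    obtain ⟨t', rfl, hbt'⟩ :=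
      List.exists_eq_map_of_isChain_cons exists_eq_succ_of_cone_adj (List.isChain_cons_cons.mp hl).2
    have := hP.length_le_depth hbt' fun y hy =>
      succ_mem_cone.mp (hlV _ (List.mem_cons_of_mem _ (List.mem_map_of_mem (f := (· + 1)) hy)))
    simpa using this
  · obtain ⟨l, hl, hlV, hlen⟩ := hP.exists_length_eq_depth
    obtain _ | ⟨a, t⟩ := l
    · rw [← hlen]
      exact hP.cone.length_le_depth (.singleton 0) (by simp [zero_mem_cone])
    have hchain : (0 :: (a :: t).map (· + 1)).IsChain (cone P).Adj :=
      .cons_cons (hP.isRoot_of_length_eq_depth hl hlV hlen)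
        (show ((a :: t).map (· + 1)).IsChain (cone P).Adj from (List.isChain_map _).mpr hl)
    have := hP.cone.length_le_depth hchain (by simpa [zero_mem_cone, succ_mem_cone] using hlV)
    simpa [← hlen] using this

theorem IsValidDecomp.cone {D : FinDigraph α} {v : α} (hv : v ∈ D.verts) {org : ℕ → α}
    (h : IsValidDecomp (D.deleteVert v) P org) :
    IsValidDecomp D (cone P) fun | 0 => v | a + 1 => org a := by
  obtain ⟨hP, hmaps, hsurj, hcover⟩ := h
  have hV : (D.deleteVert v).verts = D.verts.erase v := deleteVert_verts
  refine ⟨hP.cone, ?_, fun u hu => ?_, fun x hx u hxu => ?_⟩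
  · rintro (_ | a) ha
    · exact hv
    · exact Finset.mem_of_mem_erase (hV ▸ hmaps a (succ_mem_cone.mp ha))
  · by_cases huv : u = v
    · exact ⟨0, zero_mem_cone, huv.symm⟩
    · obtain ⟨a, ha, rfl⟩ := hsurj u (hV ▸ Finset.mem_erase.mpr ⟨huv, hu⟩)
      exact ⟨a + 1, succ_mem_cone.mpr ha, rfl⟩
  by_cases huv : u = v
  · exact .inr fun l hl => ⟨0, zero_mem_of_isRootPath_cone hl, huv.symm⟩
  have huV : u ∈ (D.deleteVert v).verts :=
    hV ▸ Finset.mem_erase.mpr ⟨huv, (D.adj_mem _ _ hxu).2⟩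
  cases x with
  | zero =>
    obtain ⟨a, ha, rfl⟩ := hsurj u huV
    obtain ⟨r, hr, hra⟩ := hP.exists_isRoot_reflTransGen ha
    exact .inl ⟨a + 1, succ_mem_cone.mpr ha, rfl,
      .head (show P.cone.Adj 0 (r + 1) from hr) (reflTransGen_cone_succ hra)⟩
  | succ a =>
    have ha := succ_mem_cone.mp hx
    have hadj : (D.deleteVert v).Adj (org a) u := ⟨hxu, hV ▸ hmaps a ha, hV ▸ huV⟩
    rcases hcover a ha u hadj with ⟨u', hu', rfl, hau'⟩ | hpath
    · exact .inl ⟨u' + 1, succ_mem_cone.mpr hu', rfl, reflTransGen_cone_succ hau'⟩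
    · refine .inr fun l hl => ?_
      obtain ⟨l', rfl, hl'⟩ := exists_isRootPath_of_isRootPath_cone hl
      obtain ⟨u', hu', rfl⟩ := hpath l' hl'
      exact ⟨u' + 1, List.mem_cons_of_mem _ (List.mem_map_of_mem hu'), rfl⟩

end Cone

section DisjointUnion

/-- `P b` is placed on the numbers of parity `b`. -/
def disjointUnion (P : Bool → FinDigraph ℕ) : FinDigraph ℕ where
  verts := Finset.univ.biUnion fun b => (P b).verts.image (Nat.bit b)
  Adj x y := x.bodd = y.bodd ∧ (P x.bodd).Adj x.div2 y.div2
  adj_mem x y h := by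
    obtain ⟨hx, hy⟩ := (P x.bodd).adj_mem _ _ h.2
    simp only [Finset.mem_biUnion, Finset.mem_univ, Finset.mem_image, true_and]
    exact ⟨⟨_, _, hx, x.bit_bodd_div2⟩, ⟨_, _, h.1 ▸ hy, y.bit_bodd_div2⟩⟩

variable {P : Bool → FinDigraph ℕ}

theorem mem_disjointUnion {x : ℕ} :
    x ∈ (disjointUnion P).verts ↔ x.div2 ∈ (P x.bodd).verts := by
  simp only [disjointUnion, Finset.mem_biUnion, Finset.mem_univ, Finset.mem_image, true_and]
  refine ⟨?_, fun h => ⟨_, _, h, x.bit_bodd_div2⟩⟩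
  rintro ⟨b, a, ha, rfl⟩
  rwa [Nat.bodd_bit, Nat.div2_bit]

theorem bit_mem_disjointUnion {b : Bool} {a : ℕ} :
    Nat.bit b a ∈ (disjointUnion P).verts ↔ a ∈ (P b).verts := by
  rw [mem_disjointUnion, Nat.bodd_bit, Nat.div2_bit]

theorem disjointUnion_adj_bit {b : Bool} {a c : ℕ} :
    (disjointUnion P).Adj (Nat.bit b a) (Nat.bit b c) ↔ (P b).Adj a c := by
  simp [disjointUnion, Nat.bodd_bit, Nat.div2_bit]

theorem exists_eq_bit_of_disjointUnion_adj (b : Bool) (a y : ℕ)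
    (h : (disjointUnion P).Adj (Nat.bit b a) y) : ∃ c, y = Nat.bit b c ∧ (P b).Adj a c := by
  obtain ⟨hby, hay⟩ := h
  rw [Nat.bodd_bit] at hby hay
  rw [Nat.div2_bit] at hay
  exact ⟨y.div2, hby ▸ y.bit_bodd_div2.symm, hay⟩

theorem reflTransGen_disjointUnion_bit {b : Bool} {a c : ℕ}
    (h : Relation.ReflTransGen (P b).Adj a c) :
    Relation.ReflTransGen (disjointUnion P).Adj (Nat.bit b a) (Nat.bit b c) :=
  Relation.ReflTransGen.lift (p := (disjointUnion P).Adj) (Nat.bit b)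
    (fun _ _ => disjointUnion_adj_bit.mpr) _ _ h

theorem IsDag.disjointUnion (hP : ∀ b, (P b).IsDag) : (disjointUnion P).IsDag := by
  intro x h
  obtain ⟨b, a, rfl⟩ : ∃ b a, x = Nat.bit b a := ⟨_, _, x.bit_bodd_div2.symm⟩
  obtain ⟨c, hc, hac⟩ := h.exists_eq_apply (exists_eq_bit_of_disjointUnion_adj b)
  have hca : c = a := by simpa [Nat.div2_bit] using congrArg Nat.div2 hc.symm
  exact hP b a (hca ▸ hac)

theorem exists_isRootPath_of_isRootPath_disjointUnion {l : List ℕ} {b : Bool} {a : ℕ}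
    (h : (disjointUnion P).IsRootPath l (Nat.bit b a)) :
    ∃ l', l = l'.map (Nat.bit b) ∧ (P b).IsRootPath l' a := by
  obtain ⟨-, hl, hlV, ⟨r, hr, hrV, hroot⟩, hlast⟩ := h
  obtain _ | ⟨x, t⟩ := l
  · simp at hr
  obtain rfl : x = r := by simpa using hr
  obtain ⟨c, d, rfl⟩ : ∃ c d, x = Nat.bit c d := ⟨_, _, x.bit_bodd_div2.symm⟩
  obtain ⟨t', rfl, hdt'⟩ :=
    List.exists_eq_map_of_isChain_cons (exists_eq_bit_of_disjointUnion_adj c) hl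
  have hlast' : ((d :: t').map (Nat.bit c)).getLast? = some (Nat.bit b a) := hlast
  rw [List.getLast?_map, Option.map_eq_some_iff] at hlast'
  obtain ⟨e, he, hea⟩ := hlast'
  obtain ⟨rfl, rfl⟩ : c = b ∧ e = a :=
    ⟨by simpa [Nat.bodd_bit] using congrArg Nat.bodd hea,
      by simpa [Nat.div2_bit] using congrArg Nat.div2 hea⟩
  refine ⟨d :: t', rfl, List.cons_ne_nil _ _, hdt', fun y hy => ?_,
    ⟨d, rfl, bit_mem_disjointUnion.mp hrV,
      fun u hu => hroot (Nat.bit c u) (disjointUnion_adj_bit.mpr hu)⟩, he⟩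
  exact bit_mem_disjointUnion.mp (hlV _ (List.mem_map_of_mem hy))

theorem depth_le_depth_disjointUnion (hP : ∀ b, (P b).IsDag) (b : Bool) :
    depth (P b) ≤ depth (disjointUnion P) := by
  obtain ⟨l, hl, hlV, hlen⟩ := (hP b).exists_length_eq_depth
  have hchain : (l.map (Nat.bit b)).IsChain (disjointUnion P).Adj :=
    (List.isChain_map _).mpr (hl.imp fun _ _ => disjointUnion_adj_bit.mpr)
  have := (IsDag.disjointUnion hP).length_le_depth hchain fun x hx => by
    obtain ⟨a, ha, rfl⟩ := List.mem_map.mp hx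
    exact bit_mem_disjointUnion.mpr (hlV a ha)
  simpa [hlen] using this

theorem depth_disjointUnion (hP : ∀ b, (P b).IsDag) :
    depth (disjointUnion P) = depth (P true) ⊔ depth (P false) := by
  refine le_antisymm (depth_le fun l hl hlV => ?_)
    (sup_le (depth_le_depth_disjointUnion hP true) (depth_le_depth_disjointUnion hP false))
  obtain _ | ⟨x, t⟩ := l
  · exact Nat.zero_le _
  obtain ⟨b, a, rfl⟩ : ∃ b a, x = Nat.bit b a := ⟨_, _, x.bit_bodd_div2.symm⟩
  obtain ⟨t', rfl, hat'⟩ :=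
    List.exists_eq_map_of_isChain_cons (exists_eq_bit_of_disjointUnion_adj b) hl
  have := (hP b).length_le_depth hat' fun y hy =>
    bit_mem_disjointUnion.mp (hlV _ (List.mem_map_of_mem (f := Nat.bit b) hy))
  have hb : depth (P b) ≤ depth (P true) ⊔ depth (P false) := by
    cases b
    exacts [le_sup_right, le_sup_left]
  simp only [List.length_cons, List.length_map] at this ⊢
  omega

theorem IsValidDecomp.disjointUnion {D : FinDigraph α} {S : Bool → Finset α}
    {org : Bool → ℕ → α} (hS : ∀ b, D.IsOutClosed (S b))
    (h : ∀ b, IsValidDecomp (D.induce (S b)) (P b) (org b)) :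
    IsValidDecomp (D.induce (S true ∪ S false)) (disjointUnion P) fun x => org x.bodd x.div2 := by
  have hsub : ∀ b, S b ⊆ S true ∪ S false := by
    rintro (_ | _)
    exacts [Finset.subset_union_right, Finset.subset_union_left]
  refine ⟨.disjointUnion fun b => (h b).1, fun x hx => ?_, fun u hu => ?_, fun x hx u hxu => ?_⟩
  · obtain ⟨hxD, hxS⟩ := Finset.mem_inter.mp ((h x.bodd).2.1 _ (mem_disjointUnion.mp hx))
    exact Finset.mem_inter.mpr ⟨hxD, hsub _ hxS⟩
  · obtain ⟨huD, huS⟩ := Finset.mem_inter.mp hu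
    obtain ⟨b, hb⟩ : ∃ b, u ∈ S b := by
      rcases Finset.mem_union.mp huS with hu | hu
      exacts [⟨_, hu⟩, ⟨_, hu⟩]
    obtain ⟨a, ha, rfl⟩ := (h b).2.2.1 u (Finset.mem_inter.mpr ⟨huD, hb⟩)
    exact ⟨Nat.bit b a, bit_mem_disjointUnion.mpr ha, by simp only [Nat.bodd_bit, Nat.div2_bit]⟩
  obtain ⟨b, a, rfl⟩ : ∃ b a, x = Nat.bit b a := ⟨_, _, x.bit_bodd_div2.symm⟩
  simp only [Nat.bodd_bit, Nat.div2_bit] at hxu ⊢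
  have ha := bit_mem_disjointUnion.mp hx
  have hxS := (Finset.mem_inter.mp ((h b).2.1 a ha)).2
  have hadj : (D.induce (S b)).Adj (org b a) u := ⟨hxu.1, hxS, hS b _ hxS u hxu.1⟩
  rcases (h b).2.2.2 a ha u hadj with ⟨u', hu', rfl, hau'⟩ | hpath
  · exact .inl ⟨Nat.bit b u', bit_mem_disjointUnion.mpr hu',
      by simp only [Nat.bodd_bit, Nat.div2_bit], reflTransGen_disjointUnion_bit hau'⟩
  · refine .inr fun l hl => ?_
    obtain ⟨l', rfl, hl'⟩ := exists_isRootPath_of_isRootPath_disjointUnion hl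
    obtain ⟨u', hu', rfl⟩ := hpath l' hl'
    exact ⟨Nat.bit b u', List.mem_map_of_mem hu', by simp only [Nat.bodd_bit, Nat.div2_bit]⟩

end DisjointUnion

theorem exists_isValidDecomp_induce_sup [Nonempty α] {D : FinDigraph α} {F : Finset (Finset α)}
    (d : Finset α → ℕ) (hF : ∀ R ∈ F, D.IsOutClosed R)
    (h : ∀ R ∈ F, ∃ (P : FinDigraph ℕ) (org : ℕ → α),
      IsValidDecomp (D.induce R) P org ∧ depth P = d R) :
    ∃ (P : FinDigraph ℕ) (org : ℕ → α),
      IsValidDecomp (D.induce (F.sup id)) P org ∧ depth P = F.sup d := by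
  induction F using Finset.induction_on with
  | empty =>
    exact ⟨empty, fun _ => Classical.arbitrary α, isValidDecomp_empty (Finset.inter_empty _),
      depth_empty⟩
  | insert R F _ ih =>
    obtain ⟨P₁, org₁, hP₁, hd₁⟩ := h R (Finset.mem_insert_self R F)
    have hF' : ∀ R' ∈ F, D.IsOutClosed R' := fun R' hR' => hF R' (Finset.mem_insert_of_mem hR')
    obtain ⟨P₂, org₂, hP₂, hd₂⟩ :=
      ih hF' fun R' hR' => h R' (Finset.mem_insert_of_mem hR')
    have hvalid := IsValidDecomp.disjointUnion (P := fun b => cond b P₁ P₂)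
      (S := fun b => cond b R (F.sup id)) (org := fun b => cond b org₁ org₂)
      (Bool.forall_bool.mpr ⟨isOutClosed_sup hF', hF R (Finset.mem_insert_self R F)⟩)
      (Bool.forall_bool.mpr ⟨hP₂, hP₁⟩)
    refine ⟨_, _, by rwa [Finset.sup_insert], ?_⟩
    rw [depth_disjointUnion (Bool.forall_bool.mpr ⟨hP₂.1, hP₁.1⟩), Finset.sup_insert]
    exact congrArg₂ (· ⊔ ·) hd₁ hd₂

theorem exists_isValidDecomp_depth_eq_ddp [Nonempty α] (D : FinDigraph α) :
    ∃ (P : FinDigraph ℕ) (org : ℕ → α), IsValidDecomp D P org ∧ depth P = ddp D := by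
  induction hn : D.verts.card using Nat.strong_induction_on generalizing D with
  | _ n ih =>
    obtain hD | hne := D.verts.eq_empty_or_nonempty
    · exact ⟨empty, fun _ => Classical.arbitrary α, isValidDecomp_empty hD,
        by rw [depth_empty, ddp_of_verts_eq_empty hD]⟩
    by_cases hf : D.verts.card = 1 ∨ D.fragments.card = 1
    · obtain ⟨v, hv, hddp⟩ := exists_ddp_eq_ddp_deleteVert_add_one hne hf
      have hlt : (D.deleteVert v).verts.card < n :=
        hn ▸ deleteVert_verts ▸ Finset.card_erase_lt_of_mem hv
      obtain ⟨P, org, hP, hdepth⟩ := ih _ hlt (D.deleteVert v) rfl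
      exact ⟨cone P, _, hP.cone hv, by rw [depth_cone hP.1, hdepth, hddp]⟩
    obtain ⟨h1, hf⟩ := not_or.mp hf
    have hlt : ∀ R ∈ D.fragments, (D.induce R).verts.card < n := fun R hR => by
      rw [← hn, induce_verts (mem_fragments.mp hR).1]
      exact card_lt_of_mem_fragments hf hR
    obtain ⟨P, org, hP, hdepth⟩ := exists_isValidDecomp_induce_sup (fun R => ddp (D.induce R))
      (fun R hR => isOutClosed_of_mem_fragments hR) fun R hR => ih _ (hlt R hR) (D.induce R) rfl
    rw [sup_fragments, induce_verts_self] at hP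
    have h2 : 1 < D.verts.card := lt_of_le_of_ne (Finset.card_pos.mpr hne) (Ne.symm h1)
    exact ⟨P, org, hP, by rw [hdepth, ddp_eq_sup_fragments h2 hf]⟩

end FinDigraph

open FinDigraph in
/-- For every nonempty finite digraph `D` with `ddp D = k` there is a valid
DAG-depth decomposition of `D` of depth exactly `k`. -/
theorem exists_valid_decomp_of_depth_ddp {α : Type} (D : FinDigraph α)
    (hne : D.verts.Nonempty) (k : ℕ) (hk : ddp D = k) :
    ∃ (P : FinDigraph ℕ) (org : ℕ → α), IsValidDecomp D P org ∧ depth P = k := by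
  have := hne.to_type
  exact hk ▸ exists_isValidDecomp_depth_eq_ddp D
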